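/- arXiv:1911.11338 — 2 statements merged into one kernel-verified Lean document; each statement's English description precedes it below -/
import Mathlib

section
/- In the two-leader French-DeGroot model on a connected undirected weighted graph, the polarization satisfies P ≥ 1/2. -/
open Matrix

noncomputable section

/-- Moore–Penrose pseudoinverse conditions. -/
def IsMoorePenrose {V : Type*} [Fintype V] [DecidableEq V]
    (L Lp : Matrix V V ℝ) : Prop :=
  L * Lp * L = L ∧ Lp * L * Lp = Lp ∧ (L * Lp)ᵀ = L * Lp ∧ (Lp * L)ᵀ = Lp * L

/-- Laplacian of a weighted graph given by weight function `w`. -/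
def lapOf {V : Type*} [Fintype V] [DecidableEq V] (w : V → V → ℝ) : Matrix V V ℝ :=
  Matrix.of fun i j => if i = j then ∑ k, w i k else - w i j

/-- The vector `e_u - e_v`. -/
def bvec {V : Type*} [DecidableEq V] (u v : V) : V → ℝ :=
  Pi.single u 1 - Pi.single v 1

/-- The all-ones matrix. -/
def onesM (V : Type*) [Fintype V] : Matrix V V ℝ := Matrix.of fun _ _ => 1

/-! With `y = L⁺ b`, symmetry of `L⁺` gives `bᵀ (L⁺)² b = yᵀ y`, so the bound is Cauchy–Schwarz
`(bᵀ y)² ≤ (bᵀ b) (yᵀ y) = 2 yᵀ y`, provided the denominator `bᵀ L⁺ b` does not vanish (division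
by zero would give `P = 0`). Since `L⁺ = L⁺ L L⁺`, it equals `yᵀ L y ≥ 0`; if it were zero, positive
semidefiniteness would force `L y = 0`, hence `L b = L L⁺ L b = L L L⁺ b = 0` (`L⁺` commutes with the
symmetric `L`), and by connectivity `b` would be constant. -/

namespace IsMoorePenrose

variable {V : Type*} [Fintype V] [DecidableEq V] {A X Y : Matrix V V ℝ}

theorem transpose (h : IsMoorePenrose A X) : IsMoorePenrose Aᵀ Xᵀ := by
  obtain ⟨h₁, h₂, h₃, h₄⟩ := h
  refine ⟨?_, ?_, ?_, ?_⟩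
  · simpa only [transpose_mul, Matrix.mul_assoc] using congrArg Matrix.transpose h₁
  · simpa only [transpose_mul, Matrix.mul_assoc] using congrArg Matrix.transpose h₂
  · rw [← transpose_mul, h₄, h₄]
  · rw [← transpose_mul, h₃, h₃]

theorem mul_mul_eq_left (hX : IsMoorePenrose A X) (hY : IsMoorePenrose A Y) :
    X * A * Y = X := by
  obtain ⟨-, hX₂, hX₃, -⟩ := hX
  obtain ⟨hY₁, -, hY₃, -⟩ := hY
  calc X * A * Y = X * (A * X * (A * Y)) := by simp only [← Matrix.mul_assoc, hX₂]
    _ = X * ((A * X)ᵀ * (A * Y)ᵀ) := by rw [hX₃, hY₃]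
    _ = X * (A * Y * A * X)ᵀ := by simp only [← transpose_mul, Matrix.mul_assoc]
    _ = X := by rw [hY₁, hX₃, ← Matrix.mul_assoc, hX₂]

theorem unique (hX : IsMoorePenrose A X) (hY : IsMoorePenrose A Y) : X = Y := by
  have hXY : (X * A * Y)ᵀ = Yᵀ := by
    simpa only [transpose_mul, Matrix.mul_assoc] using mul_mul_eq_left hY.transpose hX.transpose
  rw [← mul_mul_eq_left hX hY, ← transpose_inj, hXY]

theorem transpose_eq_self (h : IsMoorePenrose A X) (hA : A.IsSymm) : Xᵀ = X :=
  (hA.eq ▸ h.transpose).unique h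

theorem mul_comm_of_isSymm (h : IsMoorePenrose A X) (hA : A.IsSymm) : X * A = A * X := by
  rw [← h.2.2.2, transpose_mul, hA.eq, h.transpose_eq_self hA]

theorem dotProduct_mulVec_eq (h : IsMoorePenrose A X) (hA : A.IsSymm) (b : V → ℝ) :
    b ⬝ᵥ X *ᵥ b = (X *ᵥ b) ⬝ᵥ A *ᵥ (X *ᵥ b) := by
  conv_lhs => rw [← h.2.1]
  rw [← mulVec_mulVec, ← mulVec_mulVec, dotProduct_mulVec, ← mulVec_transpose,
    h.transpose_eq_self hA]

theorem mulVec_eq_zero_of_mulVec_mulVec_eq_zero (h : IsMoorePenrose A X) (hA : A.IsSymm)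
    {b : V → ℝ} (hb : A *ᵥ (X *ᵥ b) = 0) : A *ᵥ b = 0 := by
  rw [← h.1, Matrix.mul_assoc, h.mul_comm_of_isSymm hA, ← mulVec_mulVec, ← mulVec_mulVec,
    hb, mulVec_zero]

theorem dotProduct_mulVec_pos (h : IsMoorePenrose A X) (hA : A.PosSemidef) {b : V → ℝ}
    (hb : A *ᵥ b ≠ 0) : 0 < b ⬝ᵥ X *ᵥ b := by
  have hA' : A.IsSymm := isHermitian_iff_isSymm.mp hA.isHermitian
  have hquad := hA.dotProduct_mulVec_zero_iff (X *ᵥ b)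
  rw [star_trivial] at hquad
  rw [h.dotProduct_mulVec_eq hA']
  refine (hA.dotProduct_mulVec_nonneg (X *ᵥ b)).lt_of_ne' fun h0 => hb ?_
  exact h.mulVec_eq_zero_of_mulVec_mulVec_eq_zero hA' (hquad.mp h0)

end IsMoorePenrose

theorem sq_dotProduct_mulVec_le {V : Type*} [Fintype V] {X : Matrix V V ℝ} (hX : X.IsSymm)
    (b : V → ℝ) : (b ⬝ᵥ X *ᵥ b) ^ 2 ≤ (b ⬝ᵥ b) * (b ⬝ᵥ (X * X) *ᵥ b) := by
  have hnorm : b ⬝ᵥ (X * X) *ᵥ b = (X *ᵥ b) ⬝ᵥ (X *ᵥ b) := by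
    rw [← mulVec_mulVec, dotProduct_mulVec, ← mulVec_transpose, hX.eq]
  rw [hnorm]
  simpa only [dotProduct, ← sq] using Finset.sum_mul_sq_le_sq_mul_sq Finset.univ b (X *ᵥ b)

section Laplacian

variable {V : Type*} [Fintype V] [DecidableEq V] {w : V → V → ℝ}

theorem lapOf_isSymm (hwsymm : ∀ i j, w i j = w j i) : (lapOf w).IsSymm := by
  refine IsSymm.ext_iff.mpr fun i j => ?_
  by_cases hij : i = j
  · rw [hij]
  · simp [lapOf, hij, Ne.symm hij, hwsymm i j]

theorem lapOf_mulVec_apply (hw0 : ∀ i, w i i = 0) (x : V → ℝ) (i : V) :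
    (lapOf w *ᵥ x) i = ∑ j, w i j * (x i - x j) := by
  have hrow : ∀ j, lapOf w i j = (if i = j then ∑ k, w i k else 0) - w i j := by
    intro j
    by_cases hij : i = j
    · subst hij; simp [lapOf, hw0]
    · simp [lapOf, hij]
  simp only [mulVec, dotProduct, hrow, sub_mul, Finset.sum_sub_distrib, ite_mul, zero_mul,
    Finset.sum_ite_eq, Finset.mem_univ, if_true, mul_sub, Finset.sum_mul]

theorem two_mul_dotProduct_lapOf_mulVec (hw0 : ∀ i, w i i = 0) (hwsymm : ∀ i j, w i j = w j i)
    (x : V → ℝ) : 2 * (x ⬝ᵥ lapOf w *ᵥ x) = ∑ i, ∑ j, w i j * (x i - x j) ^ 2 := by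
  have hexpand : x ⬝ᵥ lapOf w *ᵥ x = ∑ i, ∑ j, w i j * (x i * (x i - x j)) := by
    simp only [dotProduct, lapOf_mulVec_apply hw0, Finset.mul_sum]
    exact Finset.sum_congr rfl fun i _ => Finset.sum_congr rfl fun j _ => by ring
  have hswap : ∑ i, ∑ j, w i j * (x i * (x i - x j)) = ∑ i, ∑ j, w i j * (x j * (x j - x i)) := by
    rw [Finset.sum_comm]
    simp only [hwsymm]
  calc 2 * (x ⬝ᵥ lapOf w *ᵥ x)
      = ∑ i, ∑ j, w i j * (x i * (x i - x j)) + ∑ i, ∑ j, w i j * (x j * (x j - x i)) := by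
        rw [← hswap, hexpand, two_mul]
    _ = ∑ i, ∑ j, w i j * (x i - x j) ^ 2 := by
        simp only [← Finset.sum_add_distrib]
        exact Finset.sum_congr rfl fun i _ => Finset.sum_congr rfl fun j _ => by ring

theorem lapOf_posSemidef (hw0 : ∀ i, w i i = 0) (hwsymm : ∀ i j, w i j = w j i)
    (hwnn : ∀ i j, 0 ≤ w i j) : (lapOf w).PosSemidef := by
  refine .of_dotProduct_mulVec_nonneg (isHermitian_iff_isSymm.mpr (lapOf_isSymm hwsymm))
    fun x => ?_
  have hsum : 0 ≤ ∑ i, ∑ j, w i j * (x i - x j) ^ 2 :=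
    Finset.sum_nonneg fun i _ => Finset.sum_nonneg fun j _ => mul_nonneg (hwnn i j) (sq_nonneg _)
  rw [star_trivial]
  linarith [two_mul_dotProduct_lapOf_mulVec hw0 hwsymm x]

end Laplacian

section bvec

variable {V : Type*} [DecidableEq V] {u v : V}

theorem bvec_dotProduct_self [Fintype V] (h : u ≠ v) : bvec u v ⬝ᵥ bvec u v = 2 := by
  norm_num [bvec, dotProduct, mul_sub, Pi.single_apply, Finset.sum_sub_distrib, h, h.symm]

theorem bvec_ne_const (h : u ≠ v) (c : ℝ) : bvec u v ≠ fun _ => c := by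
  intro hc
  have hu := congrFun hc u
  have hv := congrFun hc v
  simp [bvec, h, h.symm] at hu hv
  linarith

end bvec

theorem polarization_ge_half_general {n : ℕ}
    (w : Fin n → Fin n → ℝ) (L Lp : Matrix (Fin n) (Fin n) ℝ)
    (hw0 : ∀ i, w i i = 0) (hwsymm : ∀ i j, w i j = w j i) (hwnn : ∀ i j, 0 ≤ w i j)
    (hL : L = lapOf w)
    (hconn : ∀ x : Fin n → ℝ, L *ᵥ x = 0 → ∃ c : ℝ, x = fun _ => c)
    (hMP : IsMoorePenrose L Lp)
    (s0 s1 : Fin n) (hs : s0 ≠ s1) :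
    (1 : ℝ) / 2 ≤
      (bvec s1 s0 ⬝ᵥ (Lp * Lp) *ᵥ bvec s1 s0) /
        (bvec s1 s0 ⬝ᵥ Lp *ᵥ bvec s1 s0) ^ 2 := by
  subst hL
  have hLp : Lp.IsSymm := hMP.transpose_eq_self (lapOf_isSymm hwsymm)
  have hD : 0 < bvec s1 s0 ⬝ᵥ Lp *ᵥ bvec s1 s0 := by
    refine hMP.dotProduct_mulVec_pos (lapOf_posSemidef hw0 hwsymm hwnn) fun hb => ?_
    obtain ⟨c, hc⟩ := hconn _ hb
    exact bvec_ne_const hs.symm c hc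
  have hcs := sq_dotProduct_mulVec_le hLp (bvec s1 s0)
  rw [bvec_dotProduct_self hs.symm] at hcs
  rw [le_div_iff₀ (pow_pos hD 2)]
  linarith

theorem polarization_ge_half {n : ℕ} (hn : 2 ≤ n)
    (w : Fin n → Fin n → ℝ) (L Lp : Matrix (Fin n) (Fin n) ℝ)
    (hw0 : ∀ i, w i i = 0) (hwsymm : ∀ i j, w i j = w j i) (hwnn : ∀ i j, 0 ≤ w i j)
    (hL : L = lapOf w)
    (hconn : ∀ x : Fin n → ℝ, L *ᵥ x = 0 → ∃ c : ℝ, x = fun _ => c)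
    (hMP : IsMoorePenrose L Lp)
    (s0 s1 : Fin n) (hs : s0 ≠ s1) :
    (1 : ℝ) / 2 ≤
      (bvec s1 s0 ⬝ᵥ (Lp * Lp) *ᵥ bvec s1 s0) /
        (bvec s1 s0 ⬝ᵥ Lp *ᵥ bvec s1 s0) ^ 2 :=
  polarization_ge_half_general w L Lp hw0 hwsymm hwnn hL hconn hMP s0 s1 hs
end
end

section
/- In the Friedkin-Johnsen model, with s = BK1, P = I − (1 κᵀ)/(Σ_v κ_v), and s̃ = Pᵀ s, the identity P(L+K)⁻¹ s = (L+K)⁻¹ s̃ holds. -/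
/-!
The rows of `L` sum to zero, so `(L + K) 1 = κ`; as `L + K` is strictly diagonally dominant it is
invertible, whence `(L + K)⁻¹ κ = 1`, and by symmetry `κᵀ (L + K)⁻¹ = 1ᵀ`. Therefore `P (L + K)⁻¹`
and `(L + K)⁻¹ Pᵀ` are both `(L + K)⁻¹ - (∑ v, κ v)⁻¹ 1 1ᵀ`, already as matrices.
-/

open Matrix

noncomputable section

section Laplacian

variable {V : Type*} [Fintype V] [DecidableEq V] {w : V → V → ℝ}

lemma lapOf_transpose (hw : ∀ i j, w i j = w j i) : (lapOf w)ᵀ = lapOf w := by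
  ext i j
  by_cases h : i = j
  · simp [lapOf, h]
  · simp [lapOf, h, Ne.symm h, hw i j]

lemma lapOf_eq_diagonal_sub (hw0 : ∀ i, w i i = 0) :
    lapOf w = diagonal (fun i => ∑ k, w i k) - Matrix.of w := by
  ext i j
  by_cases h : i = j
  · subst h; simp [lapOf, hw0]
  · simp [lapOf, h]

lemma lapOf_mulVec_one (hw0 : ∀ i, w i i = 0) : lapOf w *ᵥ (fun _ => 1) = 0 := by
  rw [lapOf_eq_diagonal_sub hw0, sub_mulVec]
  ext i
  rw [Pi.sub_apply, mulVec_diagonal]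
  simp [mulVec, dotProduct]

lemma lapOf_add_diagonal_mulVec_one (hw0 : ∀ i, w i i = 0) (κ : V → ℝ) :
    (lapOf w + diagonal κ) *ᵥ (fun _ => 1) = κ := by
  ext i
  simp [add_mulVec, lapOf_mulVec_one hw0, mulVec_diagonal]

lemma det_lapOf_add_diagonal_ne_zero (hw : ∀ i j, 0 ≤ w i j) {κ : V → ℝ} (hκ : ∀ v, 0 < κ v) :
    (lapOf w + diagonal κ).det ≠ 0 := by
  refine det_ne_zero_of_sum_row_lt_diag fun i => ?_
  have hoff : ∀ j ∈ Finset.univ.erase i, ‖(lapOf w + diagonal κ) i j‖ = w i j := fun j hj => by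
    simp [lapOf, Ne.symm (Finset.ne_of_mem_erase hj), abs_of_nonneg (hw i j)]
  have hdiag : ‖(lapOf w + diagonal κ) i i‖ = ∑ k, w i k + κ i := by
    simp only [Matrix.add_apply, diagonal_apply_eq, lapOf, of_apply, Real.norm_eq_abs]
    exact abs_of_pos (add_pos_of_nonneg_of_pos (Finset.sum_nonneg fun k _ => hw i k) (hκ i))
  rw [Finset.sum_congr rfl hoff, hdiag]
  calc ∑ j ∈ Finset.univ.erase i, w i j ≤ ∑ k, w i k :=
        Finset.sum_le_sum_of_subset_of_nonneg (Finset.erase_subset _ _) fun k _ _ => hw i k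
    _ < ∑ k, w i k + κ i := lt_add_of_pos_right _ (hκ i)

lemma lapOf_add_diagonal_inv_mulVec (hw0 : ∀ i, w i i = 0) (hw : ∀ i j, 0 ≤ w i j)
    {κ : V → ℝ} (hκ : ∀ v, 0 < κ v) :
    (lapOf w + diagonal κ)⁻¹ *ᵥ κ = fun _ => 1 := by
  have := invertibleOfIsUnitDet _ (isUnit_iff_ne_zero.2 (det_lapOf_add_diagonal_ne_zero hw hκ))
  exact inv_mulVec_eq_vec (lapOf_add_diagonal_mulVec_one hw0 κ).symm

end Laplacian

lemma one_sub_smul_vecMulVec_mul_eq_mul_transpose {V α : Type*} [Fintype V] [DecidableEq V]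
    [CommRing α] {A : Matrix V V α} (hA : Aᵀ = A) {κ : V → α} (hκ : A *ᵥ κ = fun _ => 1)
    (a : α) :
    (1 - a • vecMulVec (fun _ => 1) κ) * A = A * (1 - a • vecMulVec (fun _ => 1) κ)ᵀ := by
  rw [transpose_sub, transpose_one, transpose_smul, transpose_vecMulVec, sub_mul, mul_sub,
    one_mul, mul_one, smul_mul, Matrix.mul_smul, vecMulVec_mul, mul_vecMulVec, ← mulVec_transpose,
    hA, hκ]

theorem fj_P_identity_general {n : ℕ}
    (w : Fin n → Fin n → ℝ) (L : Matrix (Fin n) (Fin n) ℝ)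
    (κ : Fin n → ℝ)
    (hw0 : ∀ i, w i i = 0) (hwsymm : ∀ i j, w i j = w j i) (hwnn : ∀ i j, 0 ≤ w i j)
    (hL : L = lapOf w)
    (hκ : ∀ v, 0 < κ v)
    (P : Matrix (Fin n) (Fin n) ℝ)
    (hP : P = (1 : Matrix (Fin n) (Fin n) ℝ) -
      (∑ v, κ v)⁻¹ • vecMulVec (fun _ => 1) κ)
    (s stilde : Fin n → ℝ)
    (hstilde : stilde = Pᵀ *ᵥ s) :
    P *ᵥ ((L + diagonal κ)⁻¹ *ᵥ s) = (L + diagonal κ)⁻¹ *ᵥ stilde := by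
  subst hL hP hstilde
  have hsymm : ((lapOf w + diagonal κ)⁻¹)ᵀ = (lapOf w + diagonal κ)⁻¹ := by
    rw [transpose_nonsing_inv, transpose_add, lapOf_transpose hwsymm, diagonal_transpose]
  rw [mulVec_mulVec, mulVec_mulVec, one_sub_smul_vecMulVec_mul_eq_mul_transpose hsymm
    (lapOf_add_diagonal_inv_mulVec hw0 hwnn hκ)]

theorem fj_P_identity {n : ℕ}
    (w : Fin n → Fin n → ℝ) (L : Matrix (Fin n) (Fin n) ℝ)
    (κ β : Fin n → ℝ)
    (hw0 : ∀ i, w i i = 0) (hwsymm : ∀ i j, w i j = w j i) (hwnn : ∀ i j, 0 ≤ w i j)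
    (hL : L = lapOf w)
    (hconn : ∀ x : Fin n → ℝ, L *ᵥ x = 0 → ∃ c : ℝ, x = fun _ => c)
    (hκ : ∀ v, 0 < κ v) (hβ : ∀ v, β v ∈ Set.Icc (0 : ℝ) 1)
    (P : Matrix (Fin n) (Fin n) ℝ)
    (hP : P = (1 : Matrix (Fin n) (Fin n) ℝ) -
      (∑ v, κ v)⁻¹ • vecMulVec (fun _ => 1) κ)
    (s stilde : Fin n → ℝ)
    (hsdef : s = (diagonal β * diagonal κ) *ᵥ fun _ => 1)
    (hstilde : stilde = Pᵀ *ᵥ s) :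
    P *ᵥ ((L + diagonal κ)⁻¹ *ᵥ s) = (L + diagonal κ)⁻¹ *ᵥ stilde :=
  fj_P_identity_general w L κ hw0 hwsymm hwnn hL hκ P hP s stilde hstilde
end
end
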